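/- Let V_1 and V_2 be finite-dimensional vector spaces over F_p and let σ : ℙ(V_1) → ℙ(V_2) be an injective map. Then the set P_σ = ({0} × V_2) ∪ ⋃_{[x] ∈ ℙ(V_1)} span(x) × span(σ̃(x)) is transverse, where σ̃(x) denotes any vector representative of σ([x]) and span denotes the linear span. -/

import Mathlib

/-!
Over `x ≠ 0` the vertical fibre of `P_σ` is the line `σ[x]`, and over `y ≠ 0` the horizontal
fibre is `{0}` or the line `[x]` with `σ[x] = [y]`, unique by injectivity of `σ`. All fibres are
therefore subgroups, which is exactly stability under the two sums.
-/

open Projectivization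

/-- The vertical sum `A +V A`. -/
def vSum {V1 V2 : Type*} [Add V2] (A : Set (V1 × V2)) : Set (V1 × V2) :=
  {q | ∃ y₁ y₂, (q.1, y₁) ∈ A ∧ (q.1, y₂) ∈ A ∧ q.2 = y₁ + y₂}

/-- The horizontal sum `A +H A`. -/
def hSum {V1 V2 : Type*} [Add V1] (A : Set (V1 × V2)) : Set (V1 × V2) :=
  {q | ∃ x₁ x₂, (x₁, q.2) ∈ A ∧ (x₂, q.2) ∈ A ∧ q.1 = x₁ + x₂}

/-- A set is transverse when it is stable under vertical and horizontal sums. -/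
def IsTransverse {V1 V2 : Type*} [Add V1] [Add V2] (A : Set (V1 × V2)) : Prop :=
  vSum A = A ∧ hSum A = A

open scoped LinearAlgebra.Projectivization

section FibreSums

variable {V1 V2 : Type*}

theorem vSum_eq_self [AddZeroClass V2] {A : Set (V1 × V2)} (hzero : ∀ x, (x, 0) ∈ A)
    (hadd : ∀ x y₁ y₂, (x, y₁) ∈ A → (x, y₂) ∈ A → (x, y₁ + y₂) ∈ A) : vSum A = A := by
  refine Set.Subset.antisymm ?_ fun q hq => ⟨q.2, 0, hq, hzero q.1, (add_zero _).symm⟩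
  rintro ⟨x, y⟩ ⟨y₁, y₂, h₁, h₂, rfl⟩
  exact hadd x y₁ y₂ h₁ h₂

theorem hSum_eq_self [AddZeroClass V1] {A : Set (V1 × V2)} (hzero : ∀ y, (0, y) ∈ A)
    (hadd : ∀ x₁ x₂ y, (x₁, y) ∈ A → (x₂, y) ∈ A → (x₁ + x₂, y) ∈ A) : hSum A = A := by
  refine Set.Subset.antisymm ?_ fun q hq => ⟨0, q.1, hzero q.2, hq, (zero_add _).symm⟩
  rintro ⟨x, y⟩ ⟨x₁, x₂, h₁, h₂, rfl⟩
  exact hadd x₁ x₂ y h₁ h₂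

end FibreSums

namespace Projectivization

variable {K V : Type*} [DivisionRing K] [AddCommGroup V] [Module K V]

theorem mem_span_rep_mk (v : V) (hv : v ≠ 0) : v ∈ K ∙ (mk K v hv).rep := by
  rw [← submodule_eq, submodule_mk]
  exact Submodule.mem_span_singleton_self v

theorem mk_eq_of_mem_span_rep {a : ℙ K V} {v : V} (hv : v ≠ 0) (h : v ∈ K ∙ a.rep) :
    mk K v hv = a := by
  obtain ⟨c, rfl⟩ := Submodule.mem_span_singleton.mp h
  conv_rhs => rw [← a.mk_rep]
  exact (mk_eq_mk_iff' K _ _ hv a.rep_nonzero).mpr ⟨c, rfl⟩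

end Projectivization

section LineGraph

variable {K V1 V2 : Type*} [DivisionRing K] [AddCommGroup V1] [Module K V1]
  [AddCommGroup V2] [Module K V2]

/-- The set `P_σ`. -/
def lineGraph (σ : ℙ K V1 → ℙ K V2) : Set (V1 × V2) :=
  ({(0 : V1)} : Set V1) ×ˢ (Set.univ : Set V2) ∪
    ⋃ a : ℙ K V1,
      ((K ∙ a.rep : Submodule K V1) : Set V1) ×ˢ ((K ∙ (σ a).rep : Submodule K V2) : Set V2)

variable {σ : ℙ K V1 → ℙ K V2}

theorem mem_lineGraph {x : V1} {y : V2} :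
    (x, y) ∈ lineGraph σ ↔ x = 0 ∨ ∃ a, x ∈ K ∙ a.rep ∧ y ∈ K ∙ (σ a).rep := by
  simp [lineGraph]

theorem zero_mem_lineGraph_left (y : V2) : ((0 : V1), y) ∈ lineGraph σ :=
  mem_lineGraph.mpr (Or.inl rfl)

theorem zero_mem_lineGraph_right (x : V1) : (x, (0 : V2)) ∈ lineGraph σ := by
  rcases eq_or_ne x 0 with rfl | hx
  · exact zero_mem_lineGraph_left 0
  · exact mem_lineGraph.mpr <| Or.inr ⟨mk K x hx, mem_span_rep_mk x hx, zero_mem _⟩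

theorem add_mem_lineGraph_right {x : V1} {y₁ y₂ : V2} (h₁ : (x, y₁) ∈ lineGraph σ)
    (h₂ : (x, y₂) ∈ lineGraph σ) : (x, y₁ + y₂) ∈ lineGraph σ := by
  rw [mem_lineGraph] at h₁ h₂ ⊢
  rcases eq_or_ne x 0 with rfl | hx
  · exact Or.inl rfl
  obtain ⟨a, hxa, hy₁⟩ := h₁.resolve_left hx
  obtain ⟨b, hxb, hy₂⟩ := h₂.resolve_left hx
  obtain rfl : a = b := (mk_eq_of_mem_span_rep hx hxa).symm.trans (mk_eq_of_mem_span_rep hx hxb)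
  exact Or.inr ⟨a, hxa, add_mem hy₁ hy₂⟩

theorem add_mem_lineGraph_left (hσ : Function.Injective σ) {x₁ x₂ : V1} {y : V2}
    (h₁ : (x₁, y) ∈ lineGraph σ) (h₂ : (x₂, y) ∈ lineGraph σ) :
    (x₁ + x₂, y) ∈ lineGraph σ := by
  rcases eq_or_ne y 0 with rfl | hy
  · exact zero_mem_lineGraph_right _
  rw [mem_lineGraph] at h₁ h₂ ⊢
  rcases h₁ with rfl | ⟨a, hx₁, hy₁⟩
  · simpa using h₂
  rcases h₂ with rfl | ⟨b, hx₂, hy₂⟩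
  · simpa using Or.inr ⟨a, hx₁, hy₁⟩
  obtain rfl : a = b :=
    hσ <| (mk_eq_of_mem_span_rep hy hy₁).symm.trans (mk_eq_of_mem_span_rep hy hy₂)
  exact Or.inr ⟨a, add_mem hx₁ hx₂, hy₁⟩

theorem isTransverse_lineGraph (hσ : Function.Injective σ) : IsTransverse (lineGraph σ) :=
  ⟨vSum_eq_self zero_mem_lineGraph_right fun _ _ _ => add_mem_lineGraph_right,
    hSum_eq_self zero_mem_lineGraph_left fun _ _ _ => add_mem_lineGraph_left hσ⟩

end LineGraph

theorem transverse_of_injective_projective_map_general (p : ℕ) [Fact p.Prime]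
    (V1 V2 : Type*) [AddCommGroup V1] [Module (ZMod p) V1]
    [AddCommGroup V2] [Module (ZMod p) V2]
    (σ : Projectivization (ZMod p) V1 → Projectivization (ZMod p) V2)
    (hσ : Function.Injective σ) :
    IsTransverse
      (({(0 : V1)} : Set V1) ×ˢ (Set.univ : Set V2) ∪
        ⋃ x : Projectivization (ZMod p) V1,
          ((Submodule.span (ZMod p) {x.rep} : Submodule (ZMod p) V1) : Set V1) ×ˢ
            ((Submodule.span (ZMod p) {(σ x).rep} : Submodule (ZMod p) V2) : Set V2)) :=
  isTransverse_lineGraph hσ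

/-- For an injective map `σ : ℙ(V₁) → ℙ(V₂)`, the set
`P_σ = ({0} × V₂) ∪ ⋃_{[x] ∈ ℙ(V₁)} span(x) × span(σ([x]))` is transverse. -/
theorem transverse_of_injective_projective_map (p : ℕ) [Fact p.Prime]
    (V1 V2 : Type*) [AddCommGroup V1] [Module (ZMod p) V1]
    [AddCommGroup V2] [Module (ZMod p) V2]
    [FiniteDimensional (ZMod p) V1] [FiniteDimensional (ZMod p) V2]
    (σ : Projectivization (ZMod p) V1 → Projectivization (ZMod p) V2)
    (hσ : Function.Injective σ) :
    IsTransverse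
      (({(0 : V1)} : Set V1) ×ˢ (Set.univ : Set V2) ∪
        ⋃ x : Projectivization (ZMod p) V1,
          ((Submodule.span (ZMod p) {x.rep} : Submodule (ZMod p) V1) : Set V1) ×ˢ
            ((Submodule.span (ZMod p) {(σ x).rep} : Submodule (ZMod p) V2) : Set V2)) :=
  transverse_of_injective_projective_map_general p V1 V2 σ hσ
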